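/- Every metric double vector bundle (E;B,Q;M) admits a Lagrangian splitting: there exists a linear splitting Σ: Q×_M B→E whose image is maximal isotropic with respect to the linear metric on E→B. (Explicitly, given any linear splitting with symmetric tensor Λ∈S²(Q,B*) defined by ⟨σ_Q(q₁),σ_Q(q₂)⟩=ℓ_{Λ(q₁,q₂)}, the modified lift σ'_Q(q)=σ_Q(q)−(1/2)(Λ(q,·)*)~ is Lagrangian.) -/
import Mathlib


/-!
# Statement 1

Every metric double vector bundle `(𝔼; B, Q; M)` admits a Lagrangian splitting.

We work in an algebraic model of the smooth objects involved: the manifold `M` is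
encoded by its algebra of functions `C` (a commutative `ℝ`-algebra), a vector bundle by
its `C`-module of sections, and the metric double vector bundle `(𝔼; Q, B; M)` with core
`Q^*` by the data of the side modules `Q = Γ(Q)`, `B = Γ(B)`, the core module
`T = Γ(Q^*)` together with the (perfect) duality pairing `pQ` between `Q` and `T`, and
the `C`-module `L = Γ^ℓ_B(𝔼)` of linear sections of `𝔼 → B`, which sits in the exact
sequence `0 → Hom(B, Q^*) → Γ^ℓ_B(𝔼) → Γ(Q) → 0` (maps `ι` and `prQ`).  The linear
metric is encoded by the symmetric pairing `met` assigning to two linear sections the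
corresponding linear function on `B` (an element of `Hom(B, C)`), with
`⟨φ~, χ⟩ = ℓ_{φ^*(pr χ)}` for core-linear sections (`met_core`).  A linear splitting is a
`C`-linear right inverse `σ` of `prQ`; it is Lagrangian iff `⟨σ q₁, σ q₂⟩ = 0` for all
`q₁ q₂`.  The smooth existence of some linear splitting is the hypothesis `hsplit`, and
perfectness of the pairing is `reps`.
-/

noncomputable section

universe u

/-- A (nondegenerate) `C`-bilinear pairing between the modules `Q` and `T`. -/
structure CPairing (C : Type u) [CommRing C] [Algebra ℝ C]
    (Q T : Type u) [AddCommGroup Q] [Module C Q] [AddCommGroup T] [Module C T] where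
  p : Q →ₗ[C] T →ₗ[C] C
  nondeg_left : ∀ q, (∀ τ, p q τ = 0) → q = 0
  nondeg_right : ∀ τ, (∀ q, p q τ = 0) → τ = 0

/-- Every metric double vector bundle admits a Lagrangian splitting:
a linear splitting `σ` of `prQ : Γ^ℓ_B(𝔼) → Γ(Q)` whose image is maximal isotropic,
i.e. `⟨σ q₁, σ q₂⟩ = 0` for all `q₁, q₂ ∈ Γ(Q)`. -/
theorem metricDVB_admits_lagrangian_splitting
    (C Q B T L : Type u) [CommRing C] [Algebra ℝ C]
    [AddCommGroup Q] [Module C Q] [AddCommGroup B] [Module C B]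
    [AddCommGroup T] [Module C T] [AddCommGroup L] [Module C L]
    (pQ : CPairing C Q T)
    -- the inclusion of core-linear sections `Hom(B, Q^*) → Γ^ℓ_B(𝔼)`
    (ι : (B →ₗ[C] T) →ₗ[C] L)
    -- the projection of a linear section to its base section in `Γ(Q)`
    (prQ : L →ₗ[C] Q)
    (hι : Function.Injective ι) (hpr : Function.Surjective prQ)
    (hexact : ∀ l : L, prQ l = 0 ↔ ∃ φ : B →ₗ[C] T, ι φ = l)
    -- the linear metric, with values the linear functions on `B`
    (met : L →ₗ[C] L →ₗ[C] (B →ₗ[C] C))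
    (met_symm : ∀ χ₁ χ₂, met χ₁ χ₂ = met χ₂ χ₁)
    (met_core : ∀ (φ : B →ₗ[C] T) (χ : L) (b : B), met (ι φ) χ b = pQ.p (prQ χ) (φ b))
    (met_nondeg : ∀ χ, (∀ χ', met χ χ' = 0) → χ = 0)
    -- smoothly, linear splittings always exist
    (hsplit : ∃ σ : Q →ₗ[C] L, ∀ q, prQ (σ q) = q)
    -- perfectness of the duality between `Q` and its dual `Q^*`
    (reps : ∀ φ : Q →ₗ[C] C, ∃ τ : T, ∀ q, pQ.p q τ = φ q) :
    ∃ σ : Q →ₗ[C] L, (∀ q, prQ (σ q) = q) ∧ ∀ q₁ q₂, met (σ q₁) (σ q₂) = 0 := by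

  classical
  obtain ⟨σ, hσ⟩ := hsplit
  set half : C := algebraMap ℝ C (1/2) with hhalf
  have half_add : half + half = 1 := by
    rw [hhalf, ← map_add, ← map_one (algebraMap ℝ C)]
    norm_num
  -- uniqueness from right nondegeneracy
  have uniq : ∀ τ₁ τ₂ : T, (∀ q', pQ.p q' τ₁ = pQ.p q' τ₂) → τ₁ = τ₂ := by
    intro τ₁ τ₂ h
    have := pQ.nondeg_right (τ₁ - τ₂) (fun q => by simp [h q])
    exact sub_eq_zero.mp this
  -- the symmetric tensor Λ
  have F : Q →ₗ[C] Q →ₗ[C] (B →ₗ[C] C) := (met.comp σ).compl₂ σ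
  -- choose τ q b with pQ.p q' (τ q b) = half * F q q' b
  have hrep : ∀ (q : Q) (b : B), ∃ τ : T, ∀ q', pQ.p q' τ = half * met (σ q) (σ q') b := by
    intro q b
    exact reps (half • (((met (σ q)).comp σ).flip b))
  choose τ hτ using hrep
  have τ_addb : ∀ q b₁ b₂, τ q (b₁ + b₂) = τ q b₁ + τ q b₂ := by
    intro q b₁ b₂
    refine uniq _ _ (fun q' => ?_)
    simp [hτ, mul_add]
  have τ_smulb : ∀ (c : C) q b, τ q (c • b) = c • τ q b := by
    intro c q b
    refine uniq _ _ (fun q' => ?_)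
    simp [hτ]
    ring
  have τ_addq : ∀ q₁ q₂ b, τ (q₁ + q₂) b = τ q₁ b + τ q₂ b := by
    intro q₁ q₂ b
    refine uniq _ _ (fun q' => ?_)
    simp [hτ, mul_add]
  have τ_smulq : ∀ (c : C) q b, τ (c • q) b = c • τ q b := by
    intro c q b
    refine uniq _ _ (fun q' => ?_)
    simp [hτ]
    ring
  let φ : Q → (B →ₗ[C] T) := fun q =>
    { toFun := τ q, map_add' := τ_addb q, map_smul' := fun c b => τ_smulb c q b }
  let Φ : Q →ₗ[C] (B →ₗ[C] T) :=
    { toFun := φ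
      map_add' := fun q₁ q₂ => LinearMap.ext fun b => τ_addq q₁ q₂ b
      map_smul' := fun c q => LinearMap.ext fun b => τ_smulq c q b }
  have hcore0 : ∀ ψ : B →ₗ[C] T, prQ (ι ψ) = 0 := fun ψ => (hexact (ι ψ)).mpr ⟨ψ, rfl⟩
  refine ⟨σ - ι ∘ₗ Φ, fun q => ?_, fun q₁ q₂ => ?_⟩
  · simp [hσ, hcore0]
  · refine LinearMap.ext fun b => ?_
    have e1 : met (ι (Φ q₁)) (σ q₂) b = half * met (σ q₁) (σ q₂) b := by
      rw [met_core, hσ]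
      exact hτ q₁ b q₂
    have e2 : met (σ q₁) (ι (Φ q₂)) b = half * met (σ q₁) (σ q₂) b := by
      rw [met_symm, met_core, hσ]
      exact (hτ q₂ b q₁).trans (by rw [met_symm (σ q₂) (σ q₁)])
    have e3 : met (ι (Φ q₁)) (ι (Φ q₂)) b = 0 := by
      rw [met_core, hcore0]
      simp
    have expand : met ((σ - ι ∘ₗ Φ) q₁) ((σ - ι ∘ₗ Φ) q₂) b
        = met (σ q₁) (σ q₂) b - met (ι (Φ q₁)) (σ q₂) b
          - met (σ q₁) (ι (Φ q₂)) b + met (ι (Φ q₁)) (ι (Φ q₂)) b := by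
      simp only [LinearMap.sub_apply, LinearMap.comp_apply, map_sub, LinearMap.sub_apply]
      ring
    rw [expand, e1, e2, e3]
    have : (1 - half - half) * met (σ q₁) (σ q₂) b = 0 := by
      have : (1 : C) - half - half = 0 := by rw [← half_add]; ring
      rw [this, zero_mul]
    simp only [LinearMap.zero_apply]
    linear_combination this
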